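/- If S_N(ρ) ≥ S_M(ρ) for all density matrices ρ (with M, N POVMs on a d-dimensional space), then every element of N is a real linear combination of elements of M. -/

import Mathlib

open Matrix BigOperators
open scoped Classical ComplexOrder

/-- A (finitely indexed) POVM on `ℂ^d`: positive semidefinite elements summing to the identity. -/
def IsPOVM {d : ℕ} {ι : Type*} [Fintype ι] (M : ι → Matrix (Fin d) (Fin d) ℂ) : Prop :=
  (∀ i, (M i).PosSemidef) ∧ ∑ i, M i = 1

/-- A density matrix: positive semidefinite with unit trace. -/
def IsDensity {d : ℕ} (ρ : Matrix (Fin d) (Fin d) ℂ) : Prop :=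
  ρ.PosSemidef ∧ ρ.trace = 1

/-- Outcome probability `tr(M_i ρ)` (real part). -/
noncomputable def prob {d : ℕ} {ι : Type*} [Fintype ι] (M : ι → Matrix (Fin d) (Fin d) ℂ)
    (ρ : Matrix (Fin d) (Fin d) ℂ) (i : ι) : ℝ := ((M i * ρ).trace).re

/-- Measured relative entropy `D_M(ρ‖σ) = Σ_i p_i log (p_i / q_i)`. -/
noncomputable def Dmeas {d : ℕ} {ι : Type*} [Fintype ι] (M : ι → Matrix (Fin d) (Fin d) ℂ)
    (ρ σ : Matrix (Fin d) (Fin d) ℂ) : ℝ :=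
  ∑ i, prob M ρ i * Real.log (prob M ρ i / prob M σ i)

/-- Observational entropy `S_M(ρ) = -Σ_i p_i log (p_i / V_i)` with `V_i = tr M_i`. -/
noncomputable def Sobs {d : ℕ} {ι : Type*} [Fintype ι] (M : ι → Matrix (Fin d) (Fin d) ℂ)
    (ρ : Matrix (Fin d) (Fin d) ℂ) : ℝ :=
  -∑ i, prob M ρ i * Real.log (prob M ρ i / ((M i).trace).re)

/-- `N` is a stochastic post-processing of `M` (`N ≫ M`). -/
def StochPost {d : ℕ} {ι κ : Type*} [Fintype ι] [Fintype κ]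
    (N : κ → Matrix (Fin d) (Fin d) ℂ) (M : ι → Matrix (Fin d) (Fin d) ℂ) : Prop :=
  ∃ Λ : κ → ι → ℝ, (∀ j i, 0 ≤ Λ j i) ∧ (∀ i, ∑ j, Λ j i = 1) ∧
    ∀ j, N j = ∑ i, Λ j i • M i

/-! If `N j` is not in the real span of the `M i`, a real functional separating it from that span
is represented by a Hermitian `A` with `re tr (M i A) = 0` for every `i` (hence `tr A = 0`, as
`∑ i, M i = 1`) and `re tr (N j A) ≠ 0`. For small `t > 0`, `ρ = 1/d + t A` is a state with the
same `M`-statistics as the maximally mixed state, so `S_M(ρ) = log d`. Writing `V_j = tr N_j`,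
`log d - S_N(ρ) = ∑ j, (V_j / d) klFun (d p_j / V_j) ≥ 0` vanishes only when every outcome
probability is `p_j = V_j / d`, so the hypothesis forces `t re tr (N j A) = 0`. -/

section EntropyGap

open InformationTheory

theorem mul_log_div_eq_klFun {p V c : ℝ} (hc : c ≠ 0) (hpV : V = 0 → p = 0) :
    p * Real.log (p / V) = V / c * klFun (c * p / V) - p * Real.log c - V / c + p := by
  rcases eq_or_ne V 0 with rfl | hV
  · simp [hpV rfl]
  rcases eq_or_ne p 0 with rfl | hp
  · simp [klFun_zero]
  rw [klFun_apply, mul_div_assoc, Real.log_mul hc (div_ne_zero hp hV)]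
  field_simp
  ring

theorem log_le_neg_sum_mul_log_div_iff {ι : Type*} [Fintype ι] {p V : ι → ℝ} {c : ℝ}
    (hc : 0 < c) (hp : ∀ i, 0 ≤ p i) (hV : ∀ i, 0 ≤ V i) (hpV : ∀ i, V i = 0 → p i = 0)
    (hp1 : ∑ i, p i = 1) (hVc : ∑ i, V i = c) :
    Real.log c ≤ -∑ i, p i * Real.log (p i / V i) ↔ ∀ i, p i = V i / c := by
  have hgap : -∑ i, p i * Real.log (p i / V i)
      = Real.log c - ∑ i, V i / c * klFun (c * p i / V i) := by
    simp only [mul_log_div_eq_klFun hc.ne' (hpV _), Finset.sum_add_distrib,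
      Finset.sum_sub_distrib, ← Finset.sum_mul, ← Finset.sum_div, hp1, hVc, div_self hc.ne']
    ring
  have hterm : ∀ i, 0 ≤ V i / c * klFun (c * p i / V i) := fun i =>
    mul_nonneg (div_nonneg (hV i) hc.le) (klFun_nonneg (by have := hp i; have := hV i; positivity))
  rw [hgap, le_sub_self_iff,
    (Finset.sum_nonneg fun i (_ : i ∈ Finset.univ) => hterm i).ge_iff_eq',
    Finset.sum_eq_zero_iff_of_nonneg fun i _ => hterm i]
  refine forall_congr' fun i => ?_
  rw [imp_iff_right (Finset.mem_univ i)]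
  rcases eq_or_ne (V i) 0 with hVi | hVi
  · simp [hVi, hpV i hVi]
  rw [mul_eq_zero, klFun_eq_zero_iff (by have := hp i; have := hV i; positivity),
    div_eq_one_iff_eq hVi, eq_div_iff hc.ne']
  simp [hVi, hc.ne', mul_comm]

end EntropyGap

namespace Matrix

variable {n : Type*} [Fintype n]

theorem PosSemidef.trace_mul_nonneg {𝕜 : Type*} [RCLike 𝕜] {A B : Matrix n n 𝕜}
    (hA : A.PosSemidef) (hB : B.PosSemidef) : 0 ≤ (A * B).trace := by
  open scoped MatrixOrder in
  obtain ⟨C, rfl⟩ := CStarAlgebra.nonneg_iff_eq_star_mul_self.mp hA.nonneg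
  rw [Matrix.mul_assoc, trace_mul_comm]
  exact (hB.mul_mul_conjTranspose_same C).trace_nonneg

open scoped MatrixOrder Matrix.Norms.L2Operator in
theorem IsHermitian.exists_pos_posSemidef_smul_one_add_smul [DecidableEq n] {A : Matrix n n ℂ}
    (hA : A.IsHermitian) {c : ℝ} (hc : 0 < c) :
    ∃ t : ℝ, 0 < t ∧ (c • 1 + t • A).PosSemidef := by
  have hshift : (A + ‖A‖ • 1).PosSemidef := by
    have := IsSelfAdjoint.neg_algebraMap_norm_le_self (a := A) hA.isSelfAdjoint
    rw [neg_le_iff_add_nonneg, Algebra.algebraMap_eq_smul_one] at this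
    exact this.posSemidef
  refine ⟨c / (‖A‖ + 1), by positivity, ?_⟩
  have : c • (1 : Matrix n n ℂ) + (c / (‖A‖ + 1)) • A
      = (c / (‖A‖ + 1)) • (A + ‖A‖ • 1) + (c / (‖A‖ + 1)) • (1 : Matrix n n ℂ) := by
    match_scalars <;> field_simp
  rw [this]
  exact (hshift.smul (by positivity)).add (PosSemidef.one.smul (by positivity))

theorem exists_re_trace_mul_eq (φ : Module.Dual ℝ (Matrix n n ℂ)) :
    ∃ X : Matrix n n ℂ, ∀ Y, φ Y = (Y * X).trace.re := by
  let L : Matrix n n ℂ →ₗ[ℝ] Module.Dual ℝ (Matrix n n ℂ) :=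
    LinearMap.mk₂ ℝ (fun X Y => (Y * X).trace.re)
      (fun X X' Y => by simp [Matrix.mul_add])
      (fun r X Y => by simp)
      (fun X Y Y' => by simp [Matrix.add_mul])
      (fun r X Y => by simp)
  have hL : Function.Injective L := by
    refine (injective_iff_map_eq_zero L).mpr fun X hX => ?_
    have hre : (Xᴴ * X).trace.re = 0 := LinearMap.congr_fun hX Xᴴ
    have hpos : 0 ≤ (Xᴴ * X).trace := (posSemidef_conjTranspose_mul_self X).trace_nonneg
    refine trace_conjTranspose_mul_self_eq_zero_iff.mp (Complex.ext hre ?_)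
    exact (Complex.nonneg_iff.mp hpos).2.symm
  obtain ⟨X, hX⟩ := (LinearMap.injective_iff_surjective_of_finrank_eq_finrank
    Subspace.dual_finrank_eq.symm).mp hL φ
  exact ⟨X, fun Y => by rw [← hX]; rfl⟩

theorem IsHermitian.re_trace_mul_realPart {Y : Matrix n n ℂ} (hY : Y.IsHermitian)
    (X : Matrix n n ℂ) : (Y * (realPart X : Matrix n n ℂ)).trace.re = (Y * X).trace.re := by
  have hstar : (Y * star X).trace = star (Y * X).trace := by
    rw [← trace_conjTranspose, conjTranspose_mul, hY.eq, trace_mul_comm, star_eq_conjTranspose]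
  rw [realPart_apply_coe, Matrix.mul_smul, trace_smul, Matrix.mul_add, trace_add, hstar,
    Complex.smul_re, Complex.add_re, Complex.star_def, Complex.conj_re]
  ring

theorem exists_isHermitian_re_trace_mul_ne_zero_of_notMem_span {S : Set (Matrix n n ℂ)}
    {X : Matrix n n ℂ} (hS : ∀ Y ∈ S, Y.IsHermitian) (hX : X.IsHermitian)
    (hXS : X ∉ Submodule.span ℝ S) :
    ∃ A : Matrix n n ℂ, A.IsHermitian ∧ (∀ Y ∈ S, (Y * A).trace.re = 0) ∧
      (X * A).trace.re ≠ 0 := by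
  obtain ⟨φ, hφX, hφS⟩ := Submodule.exists_le_ker_of_notMem hXS
  obtain ⟨B, hB⟩ := exists_re_trace_mul_eq φ
  refine ⟨realPart B, (realPart B).prop.isHermitian, fun Y hY => ?_, ?_⟩
  · rw [(hS Y hY).re_trace_mul_realPart, ← hB]
    exact hφS (Submodule.subset_span hY)
  · rwa [hX.re_trace_mul_realPart, ← hB]

end Matrix

section POVM

variable {d : ℕ} {ι : Type*} [Fintype ι] {M : ι → Matrix (Fin d) (Fin d) ℂ}
  {ρ : Matrix (Fin d) (Fin d) ℂ}

theorem IsPOVM.sum_re_trace_mul (hM : IsPOVM M) (A : Matrix (Fin d) (Fin d) ℂ) :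
    ∑ i, (M i * A).trace.re = A.trace.re := by
  simp [← Complex.re_sum, ← trace_sum, ← Finset.sum_mul, hM.2]

theorem IsPOVM.sum_re_trace (hM : IsPOVM M) : ∑ i, (M i).trace.re = d := by
  simpa using hM.sum_re_trace_mul 1

theorem IsPOVM.sum_prob (hM : IsPOVM M) (hρ : IsDensity ρ) : ∑ i, prob M ρ i = 1 := by
  simpa [prob, hρ.2] using hM.sum_re_trace_mul ρ

theorem IsPOVM.prob_nonneg (hM : IsPOVM M) (hρ : IsDensity ρ) (i : ι) : 0 ≤ prob M ρ i :=
  (Complex.nonneg_iff.mp ((hM.1 i).trace_mul_nonneg hρ.1)).1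

theorem IsPOVM.re_trace_nonneg (hM : IsPOVM M) (i : ι) : 0 ≤ (M i).trace.re :=
  (Complex.nonneg_iff.mp (hM.1 i).trace_nonneg).1

theorem IsPOVM.prob_eq_zero_of_re_trace_eq_zero (hM : IsPOVM M) (ρ : Matrix (Fin d) (Fin d) ℂ)
    {i : ι} (hi : (M i).trace.re = 0) : prob M ρ i = 0 := by
  have htr : (M i).trace = 0 :=
    Complex.ext hi (Complex.nonneg_iff.mp (hM.1 i).trace_nonneg).2.symm
  simp [prob, (hM.1 i).trace_eq_zero_iff.mp htr]

theorem IsPOVM.log_le_Sobs_iff (hd : 0 < d) (hM : IsPOVM M) (hρ : IsDensity ρ) :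
    Real.log d ≤ Sobs M ρ ↔ ∀ i, prob M ρ i = (M i).trace.re / d :=
  log_le_neg_sum_mul_log_div_iff (by exact_mod_cast hd) (hM.prob_nonneg hρ) hM.re_trace_nonneg
    (fun _ => hM.prob_eq_zero_of_re_trace_eq_zero ρ) (hM.sum_prob hρ) hM.sum_re_trace

end POVM

theorem prob_smul_one_add_smul {d : ℕ} {ι : Type*} [Fintype ι]
    (M : ι → Matrix (Fin d) (Fin d) ℂ) (c t : ℝ) (A : Matrix (Fin d) (Fin d) ℂ) (i : ι) :
    prob M (c • 1 + t • A) i = c * (M i).trace.re + t * (M i * A).trace.re := by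
  simp [prob, Matrix.mul_add]

theorem exists_pos_isDensity_inv_smul_one_add_smul {d : ℕ} (hd : 0 < d)
    {A : Matrix (Fin d) (Fin d) ℂ} (hA : A.IsHermitian) (htr : A.trace.re = 0) :
    ∃ t : ℝ, 0 < t ∧ IsDensity ((d : ℝ)⁻¹ • 1 + t • A) := by
  obtain ⟨t, ht, hpsd⟩ := hA.exists_pos_posSemidef_smul_one_add_smul (c := (d : ℝ)⁻¹)
    (by positivity)
  refine ⟨t, ht, hpsd, ?_⟩
  have him : A.trace.im = 0 :=
    Complex.conj_eq_iff_im.mp (by rw [← Complex.star_def, ← trace_conjTranspose, hA.eq])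
  have htr0 : A.trace = 0 := Complex.ext htr him
  have : (d : ℂ) ≠ 0 := by exact_mod_cast hd.ne'
  simp [htr0, this]

theorem stmt7 {d m n : ℕ} (hd : 0 < d) (M : Fin m → Matrix (Fin d) (Fin d) ℂ)
    (N : Fin n → Matrix (Fin d) (Fin d) ℂ) (hM : IsPOVM M) (hN : IsPOVM N)
    (h : ∀ ρ : Matrix (Fin d) (Fin d) ℂ, IsDensity ρ → Sobs M ρ ≤ Sobs N ρ) :
    ∀ j, N j ∈ Submodule.span ℝ (Set.range M) := by
  intro j
  by_contra hj
  obtain ⟨A, hA, hAM, hAN⟩ := exists_isHermitian_re_trace_mul_ne_zero_of_notMem_span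
    (by rintro _ ⟨i, rfl⟩; exact (hM.1 i).isHermitian) (hN.1 j).isHermitian hj
  replace hAM : ∀ i, (M i * A).trace.re = 0 := fun i => hAM _ ⟨i, rfl⟩
  obtain ⟨t, ht, hρ⟩ := exists_pos_isDensity_inv_smul_one_add_smul hd hA
    (by simpa [hAM] using (hM.sum_re_trace_mul A).symm)
  have hMunif : ∀ i, prob M ((d : ℝ)⁻¹ • 1 + t • A) i = (M i).trace.re / d := fun i => by
    simp [prob_smul_one_add_smul, hAM, div_eq_inv_mul]
  have hNj := (hN.log_le_Sobs_iff hd hρ).mp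
    (((hM.log_le_Sobs_iff hd hρ).mpr hMunif).trans (h _ hρ)) j
  rw [prob_smul_one_add_smul] at hNj
  exact hAN (by simpa [ht.ne', div_eq_inv_mul] using hNj)
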